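/- For all n ≥ 1 and all β ≥ 0, the following exact identity holds: E[ Tr( ((1+β²)I − βA) cov(μ) ) ] = n + n β² E⟨R₁₂²⟩. -/

import Mathlib

open MeasureTheory ProbabilityTheory Real Filter

noncomputable section

/-- Spin configurations on `n` sites; `true ↦ +1`, `false ↦ -1`. -/
abbrev Cfg (n : ℕ) := Fin n → Bool

/-- The ±1 spin value at site `i`. -/
def spin {n : ℕ} (s : Cfg n) (i : Fin n) : ℝ := if s i then 1 else -1

/-- Symmetrized couplings built from a matrix of i.i.d. variables: the upper-triangular
entries (`i ≤ j`) are used, and `symg g j i = symg g i j`. -/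
def symg {n : ℕ} (g : Fin n → Fin n → ℝ) (i j : Fin n) : ℝ := if i ≤ j then g i j else g j i

/-- Boltzmann weight `exp((β/√n) ∑_{i<j} g_{ij} σ_i σ_j)` of a configuration. -/
def wt (n : ℕ) (β : ℝ) (g : Fin n → Fin n → ℝ) (s : Cfg n) : ℝ :=
  Real.exp ((β / Real.sqrt n) *
    ∑ i : Fin n, ∑ j : Fin n, if i < j then symg g i j * spin s i * spin s j else 0)

/-- Partition function. -/
def Zpart (n : ℕ) (β : ℝ) (g : Fin n → Fin n → ℝ) : ℝ := ∑ s : Cfg n, wt n β g s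

/-- Gibbs probability mass of a configuration under the SK measure. -/
def gibbs (n : ℕ) (β : ℝ) (g : Fin n → Fin n → ℝ) (s : Cfg n) : ℝ := wt n β g s / Zpart n β g

/-- Gibbs average of a function of one configuration. -/
def avg1 (n : ℕ) (β : ℝ) (g : Fin n → Fin n → ℝ) (f : Cfg n → ℝ) : ℝ :=
  ∑ s : Cfg n, f s * gibbs n β g s

/-- Gibbs average of a function of two independent replicas. -/
def avg2 (n : ℕ) (β : ℝ) (g : Fin n → Fin n → ℝ) (f : Cfg n → Cfg n → ℝ) : ℝ :=
  ∑ s : Cfg n, ∑ t : Cfg n, f s t * (gibbs n β g s * gibbs n β g t)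

/-- Gibbs average of a function of three independent replicas. -/
def avg3 (n : ℕ) (β : ℝ) (g : Fin n → Fin n → ℝ) (f : Cfg n → Cfg n → Cfg n → ℝ) : ℝ :=
  ∑ s : Cfg n, ∑ t : Cfg n, ∑ u : Cfg n,
    f s t u * (gibbs n β g s * gibbs n β g t * gibbs n β g u)

/-- Gibbs average of a function of four independent replicas. -/
def avg4 (n : ℕ) (β : ℝ) (g : Fin n → Fin n → ℝ) (f : Cfg n → Cfg n → Cfg n → Cfg n → ℝ) : ℝ :=
  ∑ s : Cfg n, ∑ t : Cfg n, ∑ u : Cfg n, ∑ v : Cfg n,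
    f s t u v * (gibbs n β g s * gibbs n β g t * gibbs n β g u * gibbs n β g v)

/-- Two-point correlation `⟨σ_i σ_j⟩`. -/
def corr (n : ℕ) (β : ℝ) (g : Fin n → Fin n → ℝ) (i j : Fin n) : ℝ :=
  avg1 n β g (fun s => spin s i * spin s j)

/-- The covariance matrix `(⟨σ_i σ_j⟩)_{ij}` of the SK Gibbs measure (zero external field). -/
def covM (n : ℕ) (β : ℝ) (g : Fin n → Fin n → ℝ) : Matrix (Fin n) (Fin n) ℝ :=
  Matrix.of fun i j => corr n β g i j

/-- The interaction matrix `A = (g_{ij}/√n)`. -/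
def Amat (n : ℕ) (g : Fin n → Fin n → ℝ) : Matrix (Fin n) (Fin n) ℝ :=
  Matrix.of fun i j => symg g i j / Real.sqrt n

/-- The ℓ²→ℓ² operator (spectral) norm of a matrix. -/
def opNorm {n : ℕ} (M : Matrix (Fin n) (Fin n) ℝ) : ℝ :=
  ‖LinearMap.toContinuousLinearMap (Matrix.toEuclideanLin M)‖

/-- The Frobenius norm of a matrix. -/
def frobNorm {n : ℕ} (M : Matrix (Fin n) (Fin n) ℝ) : ℝ :=
  Real.sqrt (∑ i : Fin n, ∑ j : Fin n, (M i j) ^ 2)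

/-- The disorder: i.i.d. standard Gaussian couplings. -/
def disorder (n : ℕ) : Measure (Fin n → Fin n → ℝ) :=
  Measure.pi fun _ : Fin n => Measure.pi fun _ : Fin n => gaussianReal 0 1

/-- The overlap of two replicas. -/
def overlap {n : ℕ} (s t : Cfg n) : ℝ := (∑ i : Fin n, spin s i * spin t i) / n

/-- The multi-overlap of four replicas. -/
def overlap4 {n : ℕ} (s₁ s₂ s₃ s₄ : Cfg n) : ℝ :=
  (∑ i : Fin n, spin s₁ i * spin s₂ i * spin s₃ i * spin s₄ i) / n

/-! ### Basic pointwise lemmas -/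

lemma spin_sq {n : ℕ} (s : Cfg n) (i : Fin n) : spin s i * spin s i = 1 := by
  unfold spin; by_cases h : s i <;> simp [h]

lemma abs_spin {n : ℕ} (s : Cfg n) (i : Fin n) : |spin s i| = 1 := by
  unfold spin; by_cases h : s i <;> simp [h]

lemma wt_pos (n : ℕ) (β : ℝ) (g : Fin n → Fin n → ℝ) (s : Cfg n) : 0 < wt n β g s :=
  Real.exp_pos _

lemma Zpart_pos (n : ℕ) (β : ℝ) (g : Fin n → Fin n → ℝ) : 0 < Zpart n β g :=
  Finset.sum_pos (fun s _ => wt_pos n β g s) Finset.univ_nonempty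

lemma gibbs_nonneg (n : ℕ) (β : ℝ) (g : Fin n → Fin n → ℝ) (s : Cfg n) : 0 ≤ gibbs n β g s :=
  div_nonneg (wt_pos n β g s).le (Zpart_pos n β g).le

lemma sum_gibbs (n : ℕ) (β : ℝ) (g : Fin n → Fin n → ℝ) : ∑ s : Cfg n, gibbs n β g s = 1 := by
  unfold gibbs
  rw [← Finset.sum_div]
  exact div_self (Zpart_pos n β g).ne'

lemma corr_diag (n : ℕ) (β : ℝ) (g : Fin n → Fin n → ℝ) (i : Fin n) : corr n β g i i = 1 := by
  unfold corr avg1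
  simp only [spin_sq, one_mul]
  exact sum_gibbs n β g

lemma corr_symm (n : ℕ) (β : ℝ) (g : Fin n → Fin n → ℝ) (i j : Fin n) :
    corr n β g i j = corr n β g j i := by
  unfold corr avg1
  exact Finset.sum_congr rfl fun s _ => by simp only []; rw [mul_comm (spin s i)]

lemma symg_symm {n : ℕ} (g : Fin n → Fin n → ℝ) (i j : Fin n) : symg g i j = symg g j i := by
  unfold symg
  rcases le_total i j with h | h
  · rcases eq_or_lt_of_le h with rfl | h'
    · simp
    · rw [if_pos h, if_neg (not_le.2 h')]
  · rcases eq_or_lt_of_le h with rfl | h'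
    · simp
    · rw [if_pos h, if_neg (not_le.2 h')]

lemma abs_corr_le (n : ℕ) (β : ℝ) (g : Fin n → Fin n → ℝ) (i j : Fin n) :
    |corr n β g i j| ≤ 1 := by
  unfold corr avg1
  calc |∑ s : Cfg n, spin s i * spin s j * gibbs n β g s|
      ≤ ∑ s : Cfg n, |spin s i * spin s j * gibbs n β g s| := Finset.abs_sum_le_sum_abs _ _
    _ = ∑ s : Cfg n, gibbs n β g s := by
        refine Finset.sum_congr rfl fun s _ => ?_
        rw [abs_mul, abs_mul, abs_spin, abs_spin, one_mul, one_mul,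
          abs_of_nonneg (gibbs_nonneg n β g s)]
    _ = 1 := sum_gibbs n β g

/-! ### Continuity in the disorder -/

lemma continuous_symg {n : ℕ} (i j : Fin n) : Continuous fun g : Fin n → Fin n → ℝ => symg g i j := by
  unfold symg
  by_cases h : i ≤ j <;> simp only [if_pos, if_neg, h, if_true, if_false] <;>
    exact (continuous_apply _).comp (continuous_apply _)

lemma continuous_wt (n : ℕ) (β : ℝ) (s : Cfg n) : Continuous fun g => wt n β g s := by
  unfold wt
  refine (Continuous.mul continuous_const ?_).rexp
  refine continuous_finset_sum _ fun k _ => continuous_finset_sum _ fun l _ => ?_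
  by_cases h : k < l
  · simp only [if_pos h]
    exact ((continuous_symg k l).mul continuous_const).mul continuous_const
  · simp only [if_neg h]; exact continuous_const

lemma continuous_Zpart (n : ℕ) (β : ℝ) : Continuous fun g => Zpart n β g :=
  continuous_finset_sum _ fun s _ => continuous_wt n β s

lemma continuous_gibbs (n : ℕ) (β : ℝ) (s : Cfg n) : Continuous fun g => gibbs n β g s :=
  (continuous_wt n β s).div (continuous_Zpart n β) fun g => (Zpart_pos n β g).ne'

lemma continuous_corr (n : ℕ) (β : ℝ) (i j : Fin n) :
    Continuous fun g => corr n β g i j := by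
  unfold corr avg1
  exact continuous_finset_sum _ fun s _ => continuous_const.mul (continuous_gibbs n β s)

open scoped ENNReal NNReal

/-! ### Gaussian measure facts -/

lemma gaussianPDFReal_zero_one (x : ℝ) :
    gaussianPDFReal 0 1 x = (Real.sqrt (2 * π))⁻¹ * Real.exp (-(x ^ 2) / 2) := by
  unfold gaussianPDFReal
  norm_num

lemma gaussianReal_std_eq :
    gaussianReal 0 1 = volume.withDensity fun x => ((gaussianPDFReal 0 1 x).toNNReal : ℝ≥0∞) := by
  rw [gaussianReal_of_var_ne_zero 0 one_ne_zero]
  rfl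

lemma integral_gaussian_std (f : ℝ → ℝ) :
    ∫ x, f x ∂(gaussianReal 0 1) = ∫ x, gaussianPDFReal 0 1 x * f x := by
  rw [gaussianReal_std_eq,
    integral_withDensity_eq_integral_smul
      (measurable_gaussianPDFReal 0 1).real_toNNReal f]
  refine integral_congr_ae (Filter.Eventually.of_forall fun x => ?_)
  simp [NNReal.smul_def, Real.coe_toNNReal _ (gaussianPDFReal_nonneg 0 1 x)]

lemma integrable_gaussian_std_iff (f : ℝ → ℝ) :
    Integrable f (gaussianReal 0 1) ↔ Integrable (fun x => gaussianPDFReal 0 1 x * f x) := by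
  rw [gaussianReal_std_eq]
  refine Iff.trans (integrable_withDensity_iff_integrable_smul
      (measurable_gaussianPDFReal 0 1).real_toNNReal) ?_
  exact integrable_congr (Filter.Eventually.of_forall fun x => by
    simp [NNReal.smul_def, Real.coe_toNNReal _ (gaussianPDFReal_nonneg 0 1 x)])

lemma integrable_bdd {α : Type*} [MeasurableSpace α] (μ : Measure α) [IsFiniteMeasure μ]
    {f : α → ℝ} (hm : AEStronglyMeasurable f μ) (C : ℝ) (h : ∀ x, |f x| ≤ C) :
    Integrable f μ :=
  Integrable.mono' (integrable_const C) hm (Filter.Eventually.of_forall fun x => h x)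

lemma integrable_x_mul_expsq : Integrable (fun x : ℝ => x * Real.exp (-(x ^ 2) / 2)) := by
  have h := integrable_mul_exp_neg_mul_sq (b := (1:ℝ)/2) (by norm_num)
  refine h.congr (Filter.Eventually.of_forall fun x => ?_)
  ring_nf

lemma integrable_expsq : Integrable (fun x : ℝ => Real.exp (-(x ^ 2) / 2)) := by
  have h := integrable_exp_neg_mul_sq (b := (1:ℝ)/2) (by norm_num)
  refine h.congr (Filter.Eventually.of_forall fun x => ?_)
  ring_nf

lemma hasDerivAt_expsq (x : ℝ) :
    HasDerivAt (fun y : ℝ => Real.exp (-(y ^ 2) / 2)) (-x * Real.exp (-(x ^ 2) / 2)) x := by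
  have h1 : HasDerivAt (fun y : ℝ => -(y ^ 2) / 2) (-x) x := by
    have := ((hasDerivAt_pow 2 x).fun_neg).div_const 2
    refine this.congr_deriv ?_
    symm
    push_cast
    ring
  have := h1.exp
  convert this using 1
  ring

lemma tendsto_expsq_atTop : Tendsto (fun x : ℝ => Real.exp (-(x ^ 2) / 2)) atTop (nhds 0) := by
  apply Real.tendsto_exp_atBot.comp
  apply Tendsto.atBot_div_const (by norm_num : (0:ℝ) < 2)
  exact tendsto_neg_atBot_iff.mpr (tendsto_pow_atTop (by norm_num))

lemma tendsto_expsq_atBot : Tendsto (fun x : ℝ => Real.exp (-(x ^ 2) / 2)) atBot (nhds 0) := by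
  apply Real.tendsto_exp_atBot.comp
  apply Tendsto.atBot_div_const (by norm_num : (0:ℝ) < 2)
  rw [tendsto_neg_atBot_iff]
  have h := (tendsto_pow_atTop (α := ℝ) (n := 2) (by norm_num)).comp tendsto_abs_atBot_atTop
  refine h.congr fun x => ?_
  simp [sq_abs]

/-- Gaussian integration by parts for a bounded function with bounded derivative. -/
lemma gaussian_ibp {φ dφ : ℝ → ℝ} (hd : ∀ x, HasDerivAt φ (dφ x) x) (hdc : Continuous dφ)
    (hφ : ∀ x, |φ x| ≤ 1) (C : ℝ) (hdφ : ∀ x, |dφ x| ≤ C) :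
    ∫ x, x * φ x ∂(gaussianReal 0 1) = ∫ x, dφ x ∂(gaussianReal 0 1) := by
  have hφc : Continuous φ := by
    rw [continuous_iff_continuousAt]; exact fun x => (hd x).continuousAt
  set e : ℝ → ℝ := fun x => Real.exp (-(x ^ 2) / 2) with he
  have hepos : ∀ x, 0 < e x := fun x => Real.exp_pos _
  -- integrability of the two pieces against e
  have hint1 : Integrable (fun x => x * φ x * e x) := by
    refine Integrable.mono' integrable_x_mul_expsq.abs
      (((continuous_id.mul hφc).mul (Real.continuous_exp.comp (by continuity))).aestronglyMeasurable)
      (Filter.Eventually.of_forall fun x => ?_)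
    have : |x * φ x * e x| = |x| * |φ x| * e x := by
      rw [abs_mul, abs_mul, abs_of_pos (hepos x)]
    rw [Real.norm_eq_abs, this]
    calc |x| * |φ x| * e x ≤ |x| * 1 * e x := by
          gcongr; exact hφ x
      _ = |x * e x| := by rw [mul_one, abs_mul, abs_of_pos (hepos x)]
  have hint2 : Integrable (fun x => dφ x * e x) := by
    refine Integrable.mono' (integrable_expsq.const_mul C)
      ((hdc.mul (Real.continuous_exp.comp (by continuity))).aestronglyMeasurable)
      (Filter.Eventually.of_forall fun x => ?_)
    rw [Real.norm_eq_abs, abs_mul, abs_of_pos (hepos x)]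
    exact mul_le_mul_of_nonneg_right (hdφ x) (hepos x).le
  -- the total derivative ψ' integrates to zero over ℝ
  set F : ℝ → ℝ := fun x => -(φ x * e x) with hF
  set F' : ℝ → ℝ := fun x => x * φ x * e x - dφ x * e x with hF'
  have hFd : ∀ x, HasDerivAt F (F' x) x := by
    intro x
    have := ((hd x).fun_mul (hasDerivAt_expsq x)).fun_neg
    refine this.congr_deriv ?_
    symm
    simp only [hF', he]
    ring
  have hFtop : Tendsto F atTop (nhds 0) := by
    refine squeeze_zero_norm (fun x => ?_) tendsto_expsq_atTop
    rw [Real.norm_eq_abs, hF, abs_neg, abs_mul, abs_of_pos (hepos x)]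
    calc |φ x| * e x ≤ 1 * e x := mul_le_mul_of_nonneg_right (hφ x) (hepos x).le
      _ = e x := one_mul _
  have hFbot : Tendsto F atBot (nhds 0) := by
    refine squeeze_zero_norm (fun x => ?_) tendsto_expsq_atBot
    rw [Real.norm_eq_abs, hF, abs_neg, abs_mul, abs_of_pos (hepos x)]
    calc |φ x| * e x ≤ 1 * e x := mul_le_mul_of_nonneg_right (hφ x) (hepos x).le
      _ = e x := one_mul _
  have hF'int : Integrable F' := hint1.sub hint2
  have hIoi : ∫ x in Set.Ioi (0:ℝ), F' x = 0 - F 0 :=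
    integral_Ioi_of_hasDerivAt_of_tendsto (hFd 0).continuousAt.continuousWithinAt
      (fun x _ => hFd x) hF'int.integrableOn hFtop
  have hIic : ∫ x in Set.Iic (0:ℝ), F' x = F 0 - 0 :=
    integral_Iic_of_hasDerivAt_of_tendsto (hFd 0).continuousAt.continuousWithinAt
      (fun x _ => hFd x) hF'int.integrableOn hFbot
  have htot : ∫ x, F' x = 0 := by
    rw [← intervalIntegral.integral_Iic_add_Ioi (b := (0:ℝ)) hF'int.integrableOn hF'int.integrableOn, hIoi, hIic]
    ring
  have hsplit : ∫ x, x * φ x * e x = ∫ x, dφ x * e x := by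
    have := integral_sub hint1 hint2
    rw [hF'] at htot
    rw [htot] at this
    linarith [this]
  -- convert to gaussian integrals
  rw [integral_gaussian_std, integral_gaussian_std]
  simp only [gaussianPDFReal_zero_one]
  have hc : ∀ f : ℝ → ℝ, (∫ x, (Real.sqrt (2 * π))⁻¹ * e x * f x) = (Real.sqrt (2 * π))⁻¹ * ∫ x, e x * f x := by
    intro f
    simp only [mul_assoc]
    exact integral_const_mul _ _
  rw [hc, hc]
  congr 1
  calc (∫ x, e x * (x * φ x)) = ∫ x, x * φ x * e x := by congr 1; funext x; ring
    _ = ∫ x, dφ x * e x := hsplit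
    _ = ∫ x, e x * dφ x := by congr 1; funext x; ring

/-! ### Marginalizing one coordinate of a product measure -/

section Marginal

variable {ι : Type*} [Fintype ι] [DecidableEq ι] {α : Type*} [MeasurableSpace α]
  (μ : ι → Measure α) [∀ i, IsProbabilityMeasure (μ i)]

lemma measurePreserving_update_pi (i : ι) :
    MeasurePreserving (fun p : (ι → α) × α => Function.update p.1 i p.2)
      ((Measure.pi μ).prod (μ i)) (Measure.pi μ) := by
  refine ⟨measurable_update', ?_⟩
  refine (Measure.pi_eq fun s hs => ?_).symm
  rw [Measure.map_apply measurable_update' (MeasurableSet.univ_pi hs)]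
  have hpre : (fun p : (ι → α) × α => Function.update p.1 i p.2) ⁻¹' (Set.pi Set.univ s)
      = (Set.pi Set.univ (Function.update s i Set.univ)) ×ˢ (s i) := by
    ext p
    simp only [Set.mem_preimage, Set.mem_pi, Set.mem_univ, forall_true_left, Set.mem_prod]
    constructor
    · intro h
      refine ⟨fun j => ?_, by simpa using h i⟩
      by_cases hj : j = i
      · subst hj; simp
      · simpa [Function.update_of_ne hj] using h j
    · rintro ⟨h1, h2⟩ j
      by_cases hj : j = i
      · subst hj; simpa using h2
      · rw [Function.update_of_ne hj]
        have := h1 j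
        rwa [Function.update_of_ne hj] at this
  rw [hpre, Measure.prod_prod, Measure.pi_pi]
  have hP : ∏ j, μ j (Function.update s i Set.univ j)
      = ∏ j ∈ Finset.univ.erase i, μ j (s j) := by
    rw [← Finset.mul_prod_erase Finset.univ _ (Finset.mem_univ i), Function.update_self,
      measure_univ, one_mul]
    exact Finset.prod_congr rfl fun j hj =>
      by rw [Function.update_of_ne (Finset.ne_of_mem_erase hj)]
  rw [hP, ← Finset.mul_prod_erase Finset.univ (fun j => μ j (s j)) (Finset.mem_univ i), mul_comm]

lemma integral_update_pi (i : ι) (F : (ι → α) → ℝ) (hF : Integrable F (Measure.pi μ)) :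
    ∫ g, F g ∂Measure.pi μ
      = ∫ g, ∫ x, F (Function.update g i x) ∂(μ i) ∂Measure.pi μ := by
  have hmp := measurePreserving_update_pi μ i
  have h1 : ∫ g, F g ∂Measure.pi μ
      = ∫ p : (ι → α) × α, F (Function.update p.1 i p.2) ∂((Measure.pi μ).prod (μ i)) := by
    conv_lhs => rw [← hmp.map_eq]
    exact integral_map hmp.measurable.aemeasurable (hmp.map_eq.symm ▸ hF.1)
  rw [h1]
  exact integral_prod _ ((hmp.integrable_comp hF.1).mpr hF)

lemma map_eval_pi' (i : ι) : Measure.map (Function.eval i) (Measure.pi μ) = μ i := by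
  rw [← (measurePreserving_update_pi μ i).map_eq,
    Measure.map_map (measurable_pi_apply i) measurable_update']
  have : (Function.eval i ∘ fun p : (ι → α) × α => Function.update p.1 i p.2) = Prod.snd := by
    funext p; simp [Function.eval, Function.update_self]
  rw [this, Measure.map_snd_prod]
  simp

lemma integrable_eval_pi (i : ι) {f : α → ℝ} (hf : Integrable f (μ i)) :
    Integrable (fun g : ι → α => f (g i)) (Measure.pi μ) := by
  have : MeasurePreserving (Function.eval i) (Measure.pi μ) (μ i) :=
    ⟨measurable_pi_apply i, map_eval_pi' μ i⟩
  exact (this.integrable_comp hf.1).mpr hf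

end Marginal

/-! ### Derivative of the Gibbs correlation in a single coupling -/

section Deriv

variable (n : ℕ) (β : ℝ)

lemma psi_special (i j : Fin n) (hij : i ≤ j) (g : Fin n → Fin n → ℝ) (row : Fin n → ℝ)
    (x : ℝ) : symg (Function.update g i (Function.update row j x)) i j = x := by
  unfold symg
  rw [if_pos hij, Function.update_self, Function.update_self]

lemma psi_entry (i j k l : Fin n) (g : Fin n → Fin n → ℝ) (row : Fin n → ℝ) (x : ℝ) :
    Function.update g i (Function.update row j x) k l
      = if k = i ∧ l = j then x
        else Function.update g i (Function.update row j 0) k l := by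
  by_cases hk : k = i
  · subst hk
    by_cases hl : l = j
    · subst hl; simp
    · simp [Function.update_of_ne hl, hl, Function.update_self]
  · simp [Function.update_of_ne hk, hk]

lemma symg_psi (i j : Fin n) (hij : i < j) (k l : Fin n) (g : Fin n → Fin n → ℝ)
    (row : Fin n → ℝ) (x : ℝ) :
    symg (Function.update g i (Function.update row j x)) k l
      = if (k = i ∧ l = j) ∨ (k = j ∧ l = i) then x
        else symg (Function.update g i (Function.update row j 0)) k l := by
  unfold symg
  by_cases h : k ≤ l
  · rw [if_pos h, if_pos h, psi_entry]
    by_cases hc : k = i ∧ l = j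
    · rw [if_pos hc, if_pos (Or.inl hc)]
    · rw [if_neg hc, if_neg ?_]
      rintro (h1 | ⟨rfl, rfl⟩)
      · exact hc h1
      · exact absurd (h.trans_lt hij) (lt_irrefl _)
  · rw [if_neg h, if_neg h, psi_entry]
    by_cases hc : l = i ∧ k = j
    · rw [if_pos hc, if_pos (Or.inr ⟨hc.2, hc.1⟩)]
    · rw [if_neg hc, if_neg ?_]
      rintro (⟨rfl, rfl⟩ | h2)
      · exact h hij.le
      · exact hc ⟨h2.2, h2.1⟩

lemma hasDerivAt_wt_psi (i j : Fin n) (hij : i < j) (g : Fin n → Fin n → ℝ)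
    (row : Fin n → ℝ) (s : Cfg n) (x : ℝ) :
    HasDerivAt (fun y => wt n β (Function.update g i (Function.update row j y)) s)
      ((β / Real.sqrt n) * (spin s i * spin s j)
        * wt n β (Function.update g i (Function.update row j x)) s) x := by
  have hterm : ∀ k l : Fin n,
      HasDerivAt (fun y => if k < l then
          symg (Function.update g i (Function.update row j y)) k l * spin s k * spin s l else 0)
        (if k = i ∧ l = j then spin s i * spin s j else 0) x := by
    intro k l
    by_cases hkl : k < l
    · simp only [if_pos hkl]
      by_cases hc : k = i ∧ l = j
      · obtain ⟨hk, hl⟩ := hc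
        subst hk; subst hl
        rw [if_pos ⟨rfl, rfl⟩]
        have heq : (fun y => symg (Function.update g k (Function.update row l y)) k l
            * spin s k * spin s l) = fun y => y * spin s k * spin s l := by
          funext y; rw [psi_special n k l hkl.le]
        rw [heq]
        simpa using ((hasDerivAt_id x).mul_const (spin s k)).mul_const (spin s l)
      · rw [if_neg hc]
        have heq : (fun y => symg (Function.update g i (Function.update row j y)) k l
            * spin s k * spin s l)
            = fun _ => symg (Function.update g i (Function.update row j 0)) k l
              * spin s k * spin s l := by
          funext y
          rw [symg_psi n i j hij k l, if_neg ?_]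
          rintro (h1 | ⟨rfl, rfl⟩)
          · exact hc h1
          · exact absurd (hkl.trans hij) (lt_irrefl _)
        rw [heq]
        exact hasDerivAt_const x _
    · simp only [if_neg hkl]
      rw [if_neg ?_]
      · exact hasDerivAt_const x 0
      · rintro ⟨rfl, rfl⟩; exact hkl hij
  have hE : HasDerivAt (fun y => ∑ k : Fin n, ∑ l : Fin n, if k < l then
        symg (Function.update g i (Function.update row j y)) k l * spin s k * spin s l else 0)
      (spin s i * spin s j) x := by
    have := HasDerivAt.fun_sum (fun k (_ : k ∈ Finset.univ) =>
      HasDerivAt.fun_sum (fun l (_ : l ∈ Finset.univ) => hterm k l))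
    refine this.congr_deriv ?_
    symm
    have : (∑ k : Fin n, ∑ l : Fin n, if k = i ∧ l = j then spin s i * spin s j else 0)
        = spin s i * spin s j := by
      simp [ite_and, Finset.sum_ite_eq']
    rw [this]
  unfold wt
  have hfin := (hE.const_mul (β / Real.sqrt n)).exp
  convert hfin using 1
  ring

/-- The numerator `∑_s σ_i σ_j w(σ)` of the correlation. -/
def NsumSK (n : ℕ) (β : ℝ) (i j : Fin n) (g : Fin n → Fin n → ℝ) : ℝ :=
  ∑ s : Cfg n, spin s i * spin s j * wt n β g s

lemma corr_eq_div (g : Fin n → Fin n → ℝ) (i j : Fin n) :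
    corr n β g i j = NsumSK n β i j g / Zpart n β g := by
  unfold corr avg1 NsumSK gibbs
  rw [Finset.sum_div]
  exact Finset.sum_congr rfl fun s _ => by rw [mul_div_assoc]

lemma abs_NsumSK_le (g : Fin n → Fin n → ℝ) (i j : Fin n) :
    |NsumSK n β i j g| ≤ Zpart n β g := by
  unfold NsumSK Zpart
  calc |∑ s : Cfg n, spin s i * spin s j * wt n β g s|
      ≤ ∑ s : Cfg n, |spin s i * spin s j * wt n β g s| := Finset.abs_sum_le_sum_abs _ _
    _ = ∑ s : Cfg n, wt n β g s := by
        refine Finset.sum_congr rfl fun s _ => ?_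
        rw [abs_mul, abs_mul, abs_spin, abs_spin, one_mul, one_mul,
          abs_of_pos (wt_pos n β g s)]

lemma hasDerivAt_Zpart_psi (i j : Fin n) (hij : i < j) (g : Fin n → Fin n → ℝ)
    (row : Fin n → ℝ) (x : ℝ) :
    HasDerivAt (fun y => Zpart n β (Function.update g i (Function.update row j y)))
      ((β / Real.sqrt n)
        * NsumSK n β i j (Function.update g i (Function.update row j x))) x := by
  have := HasDerivAt.fun_sum (fun s (_ : s ∈ (Finset.univ : Finset (Cfg n))) =>
    hasDerivAt_wt_psi n β i j hij g row s x)
  refine this.congr_deriv ?_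
  symm
  unfold NsumSK
  rw [Finset.mul_sum]
  exact Finset.sum_congr rfl fun s _ => by ring

lemma hasDerivAt_Nsum_psi (i j : Fin n) (hij : i < j) (g : Fin n → Fin n → ℝ)
    (row : Fin n → ℝ) (x : ℝ) :
    HasDerivAt (fun y => NsumSK n β i j (Function.update g i (Function.update row j y)))
      ((β / Real.sqrt n)
        * Zpart n β (Function.update g i (Function.update row j x))) x := by
  unfold NsumSK
  have := HasDerivAt.fun_sum (fun s (_ : s ∈ (Finset.univ : Finset (Cfg n))) =>
    (hasDerivAt_wt_psi n β i j hij g row s x).const_mul (spin s i * spin s j))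
  refine this.congr_deriv ?_
  symm
  unfold Zpart
  rw [Finset.mul_sum]
  refine Finset.sum_congr rfl fun s _ => ?_
  have hi := spin_sq s i
  have hj := spin_sq s j
  calc (β / Real.sqrt n) * wt n β (Function.update g i (Function.update row j x)) s
      = (β / Real.sqrt n) * ((spin s i * spin s i) * (spin s j * spin s j))
        * wt n β (Function.update g i (Function.update row j x)) s := by rw [hi, hj]; ring
    _ = spin s i * spin s j * ((β / Real.sqrt n) * (spin s i * spin s j)
        * wt n β (Function.update g i (Function.update row j x)) s) := by ring

lemma hasDerivAt_corr_psi (i j : Fin n) (hij : i < j) (g : Fin n → Fin n → ℝ)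
    (row : Fin n → ℝ) (x : ℝ) :
    HasDerivAt (fun y => corr n β (Function.update g i (Function.update row j y)) i j)
      ((β / Real.sqrt n)
        * (1 - corr n β (Function.update g i (Function.update row j x)) i j ^ 2)) x := by
  have hZ := hasDerivAt_Zpart_psi n β i j hij g row x
  have hN := hasDerivAt_Nsum_psi n β i j hij g row x
  have hZne : ∀ y, Zpart n β (Function.update g i (Function.update row j y)) ≠ 0 :=
    fun y => (Zpart_pos n β _).ne'
  have hdiv := hN.fun_div hZ (hZne x)
  have heq : (fun y => NsumSK n β i j (Function.update g i (Function.update row j y))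
        / Zpart n β (Function.update g i (Function.update row j y)))
      = fun y => corr n β (Function.update g i (Function.update row j y)) i j := by
    funext y; rw [corr_eq_div]
  rw [heq] at hdiv
  refine hdiv.congr_deriv ?_
  symm
  rw [corr_eq_div]
  set Z := Zpart n β (Function.update g i (Function.update row j x))
  set N := NsumSK n β i j (Function.update g i (Function.update row j x))
  have hZ0 : Z ≠ 0 := hZne x
  calc (β / Real.sqrt n) * (1 - (N / Z) ^ 2)
      = (β / Real.sqrt n) * ((Z ^ 2 - N ^ 2) / Z ^ 2) := by
        rw [div_pow, one_sub_div (pow_ne_zero 2 hZ0)]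
    _ = (β / Real.sqrt n * Z * Z - N * (β / Real.sqrt n * N)) / Z ^ 2 := by ring

end Deriv

/-! ### The one-coordinate integration-by-parts identity -/

section InnerIBP

variable (n : ℕ) (β : ℝ)

lemma abs_dcorr_le (x : ℝ) (c : ℝ) {t : ℝ} (ht : |t| ≤ 1) : |c * (1 - t ^ 2)| ≤ |c| := by
  rw [abs_mul]
  have h1 : 0 ≤ 1 - t ^ 2 := by nlinarith [abs_nonneg t, sq_abs t]
  have h2 : 1 - t ^ 2 ≤ 1 := by nlinarith [sq_nonneg t]
  calc |c| * |1 - t ^ 2| ≤ |c| * 1 := by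
        apply mul_le_mul_of_nonneg_left _ (abs_nonneg c)
        rw [abs_of_nonneg h1]; exact h2
    _ = |c| := mul_one _

lemma inner_ibp (i j : Fin n) (hij : i ≤ j) (g : Fin n → Fin n → ℝ) (row : Fin n → ℝ) :
    ∫ x, symg (Function.update g i (Function.update row j x)) i j
        * corr n β (Function.update g i (Function.update row j x)) i j ∂(gaussianReal 0 1)
      = (β / Real.sqrt n) * ∫ x,
          (1 - corr n β (Function.update g i (Function.update row j x)) i j ^ 2)
          ∂(gaussianReal 0 1) := by
  rcases eq_or_lt_of_le hij with rfl | hij'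
  · -- diagonal case: the correlation is constant 1
    have h1 : ∀ x : ℝ, symg (Function.update g i (Function.update row i x)) i i
        * corr n β (Function.update g i (Function.update row i x)) i i = x * 1 := by
      intro x; rw [psi_special n i i le_rfl, corr_diag]
    have h2 : ∀ x : ℝ, (1 - corr n β (Function.update g i (Function.update row i x)) i i ^ 2)
        = (0 : ℝ) := by
      intro x; rw [corr_diag]; norm_num
    rw [integral_congr_ae (Filter.Eventually.of_forall h1),
      integral_congr_ae (Filter.Eventually.of_forall h2)]
    have h0 := gaussian_ibp (φ := fun _ => 1) (dφ := fun _ => 0)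
      (fun x => hasDerivAt_const x 1) continuous_const (fun x => by norm_num) 0
      (fun x => by norm_num)
    simpa using h0
  · set φ : ℝ → ℝ := fun x => corr n β (Function.update g i (Function.update row j x)) i j
      with hφdef
    have hder : ∀ x, HasDerivAt φ ((β / Real.sqrt n) * (1 - φ x ^ 2)) x :=
      fun x => hasDerivAt_corr_psi n β i j hij' g row x
    have hφcont : Continuous φ := by
      rw [continuous_iff_continuousAt]; exact fun x => (hder x).continuousAt
    have hφbd : ∀ x, |φ x| ≤ 1 := fun x => abs_corr_le n β _ i j
    have hdcont : Continuous fun x => (β / Real.sqrt n) * (1 - φ x ^ 2) :=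
      continuous_const.mul (continuous_const.sub (hφcont.pow 2))
    have hibp := gaussian_ibp hder hdcont hφbd (|β / Real.sqrt n|)
      (fun x => abs_dcorr_le x _ (hφbd x))
    have h1 : ∀ x : ℝ, symg (Function.update g i (Function.update row j x)) i j
        * corr n β (Function.update g i (Function.update row j x)) i j = x * φ x := by
      intro x; rw [psi_special n i j hij]
    rw [integral_congr_ae (Filter.Eventually.of_forall h1), hibp]
    exact integral_const_mul _ _

end InnerIBP

/-! ### Integration by parts over the full disorder -/

section KeyIBP

variable (n : ℕ) (β : ℝ)

lemma integrable_id_gaussian : Integrable (fun x : ℝ => x) (gaussianReal 0 1) := by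
  rw [integrable_gaussian_std_iff]
  simp only [gaussianPDFReal_zero_one]
  refine Integrable.mono'
    (integrable_x_mul_expsq.abs.const_mul ((Real.sqrt (2 * π))⁻¹)) ?_ ?_
  · exact ((continuous_const.mul (Real.continuous_exp.comp (by continuity))).mul
      continuous_id).aestronglyMeasurable
  · refine Filter.Eventually.of_forall fun x => ?_
    rw [Real.norm_eq_abs, abs_mul, abs_mul]
    rw [abs_of_nonneg (inv_nonneg.mpr (Real.sqrt_nonneg _)),
      abs_of_pos (Real.exp_pos _)]
    rw [abs_mul, abs_of_pos (Real.exp_pos _)]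
    ring_nf
    apply le_of_eq
    ring

lemma integrable_coord_row (j : Fin n) :
    Integrable (fun r : Fin n → ℝ => r j) (Measure.pi fun _ : Fin n => gaussianReal 0 1) :=
  integrable_eval_pi _ j (f := fun x => x) integrable_id_gaussian

lemma integrable_coord (i j : Fin n) :
    Integrable (fun g : Fin n → Fin n → ℝ => g i j) (disorder n) :=
  integrable_eval_pi (fun _ : Fin n => Measure.pi fun _ : Fin n => gaussianReal 0 1) i
    (integrable_coord_row n j)

instance disorder_probability : IsProbabilityMeasure (disorder n) := by
  unfold disorder; infer_instance

lemma continuous_F1 (i j : Fin n) :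
    Continuous fun g : Fin n → Fin n → ℝ => symg g i j * corr n β g i j :=
  (continuous_symg i j).mul (continuous_corr n β i j)

lemma abs_one_sub_sq_le {t : ℝ} (ht : |t| ≤ 1) : |1 - t ^ 2| ≤ 2 := by
  have h1 : t ^ 2 ≤ 1 := by nlinarith [sq_abs t, abs_nonneg t]
  have h2 : 0 ≤ t ^ 2 := sq_nonneg t
  rw [abs_le]; constructor <;> nlinarith

lemma integrable_F2_disorder (i j : Fin n) :
    Integrable (fun g : Fin n → Fin n → ℝ => 1 - corr n β g i j ^ 2) (disorder n) := by
  refine integrable_bdd _ ?_ 2 fun g => abs_one_sub_sq_le (abs_corr_le n β g i j)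
  exact (continuous_const.sub ((continuous_corr n β i j).pow 2)).aestronglyMeasurable

lemma integrable_F1_disorder (i j : Fin n) (hij : i ≤ j) :
    Integrable (fun g : Fin n → Fin n → ℝ => symg g i j * corr n β g i j) (disorder n) := by
  refine Integrable.mono' (integrable_coord n i j).abs
    (continuous_F1 n β i j).aestronglyMeasurable (Filter.Eventually.of_forall fun g => ?_)
  rw [Real.norm_eq_abs, abs_mul]
  have : symg g i j = g i j := if_pos hij
  rw [this]
  calc |g i j| * |corr n β g i j| ≤ |g i j| * 1 :=
        mul_le_mul_of_nonneg_left (abs_corr_le n β g i j) (abs_nonneg _)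
    _ = |g i j| := mul_one _

lemma key_ibp (i j : Fin n) :
    ∫ g, symg g i j * corr n β g i j ∂(disorder n)
      = (β / Real.sqrt n) * ∫ g, (1 - corr n β g i j ^ 2) ∂(disorder n) := by
  wlog hij : i ≤ j generalizing i j
  · have h := this j i (le_of_not_ge hij)
    have e1 : (fun g : Fin n → Fin n → ℝ => symg g i j * corr n β g i j)
        = fun g => symg g j i * corr n β g j i := by
      funext g; rw [symg_symm, corr_symm]
    have e2 : (fun g : Fin n → Fin n → ℝ => 1 - corr n β g i j ^ 2)
        = fun g => 1 - corr n β g j i ^ 2 := by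
      funext g; rw [corr_symm]
    rw [e1, e2]; exact h
  -- now i ≤ j
  set ν : Measure (Fin n → ℝ) := Measure.pi fun _ : Fin n => gaussianReal 0 1 with hν
  set F1 : (Fin n → Fin n → ℝ) → ℝ := fun g => symg g i j * corr n β g i j with hF1
  set F2 : (Fin n → Fin n → ℝ) → ℝ := fun g => 1 - corr n β g i j ^ 2 with hF2
  have hcont_update : ∀ g : Fin n → Fin n → ℝ,
      Continuous fun row : Fin n → ℝ => Function.update g i row :=
    fun g => continuous_const.update i continuous_id
  have hF1ν : ∀ g, Integrable (fun row => F1 (Function.update g i row)) ν := by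
    intro g
    refine Integrable.mono' (integrable_coord_row n j).abs
      (((continuous_F1 n β i j).comp (hcont_update g)).aestronglyMeasurable)
      (Filter.Eventually.of_forall fun row => ?_)
    rw [Real.norm_eq_abs, hF1]
    simp only []
    rw [abs_mul]
    have : symg (Function.update g i row) i j = row j := by
      unfold symg; rw [if_pos hij, Function.update_self]
    rw [this]
    calc |row j| * |corr n β (Function.update g i row) i j| ≤ |row j| * 1 :=
          mul_le_mul_of_nonneg_left (abs_corr_le n β _ i j) (abs_nonneg _)
      _ = |row j| := mul_one _
  have hF2ν : ∀ g, Integrable (fun row => F2 (Function.update g i row)) ν := by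
    intro g
    refine integrable_bdd _ ?_ 2 fun row => abs_one_sub_sq_le (abs_corr_le n β _ i j)
    exact ((continuous_const.sub ((continuous_corr n β i j).pow 2)).comp
      (hcont_update g)).aestronglyMeasurable
  have hD : disorder n = Measure.pi fun _ : Fin n => ν := rfl
  -- marginalize F1
  have s1 : ∫ g, F1 g ∂(disorder n)
      = ∫ g, ∫ row, F1 (Function.update g i row) ∂ν ∂(disorder n) := by
    rw [hD]
    exact integral_update_pi _ i F1 (integrable_F1_disorder n β i j hij)
  have s2 : ∀ g : Fin n → Fin n → ℝ, ∫ row, F1 (Function.update g i row) ∂ν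
      = ∫ row, ∫ x, F1 (Function.update g i (Function.update row j x))
          ∂(gaussianReal 0 1) ∂ν := by
    intro g
    exact integral_update_pi _ j (fun row => F1 (Function.update g i row)) (hF1ν g)
  have s3 : ∀ (g : Fin n → Fin n → ℝ) (row : Fin n → ℝ),
      ∫ x, F1 (Function.update g i (Function.update row j x)) ∂(gaussianReal 0 1)
        = (β / Real.sqrt n) * ∫ x, F2 (Function.update g i (Function.update row j x))
            ∂(gaussianReal 0 1) :=
    fun g row => inner_ibp n β i j hij g row
  -- marginalize F2 (in reverse)
  have t1 : ∫ g, F2 g ∂(disorder n)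
      = ∫ g, ∫ row, F2 (Function.update g i row) ∂ν ∂(disorder n) := by
    rw [hD]
    exact integral_update_pi _ i F2 (integrable_F2_disorder n β i j)
  have t2 : ∀ g : Fin n → Fin n → ℝ, ∫ row, F2 (Function.update g i row) ∂ν
      = ∫ row, ∫ x, F2 (Function.update g i (Function.update row j x))
          ∂(gaussianReal 0 1) ∂ν := by
    intro g
    exact integral_update_pi _ j (fun row => F2 (Function.update g i row)) (hF2ν g)
  calc ∫ g, F1 g ∂(disorder n)
      = ∫ g, ∫ row, ∫ x, F1 (Function.update g i (Function.update row j x))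
          ∂(gaussianReal 0 1) ∂ν ∂(disorder n) := by
        rw [s1]
        exact integral_congr_ae (Filter.Eventually.of_forall fun g => s2 g)
    _ = ∫ g, (β / Real.sqrt n) * ∫ row, ∫ x,
          F2 (Function.update g i (Function.update row j x))
          ∂(gaussianReal 0 1) ∂ν ∂(disorder n) := by
        refine integral_congr_ae (Filter.Eventually.of_forall fun g => ?_)
        dsimp only
        rw [← integral_const_mul]
        exact integral_congr_ae (Filter.Eventually.of_forall fun row => s3 g row)
    _ = (β / Real.sqrt n) * ∫ g, ∫ row, ∫ x,
          F2 (Function.update g i (Function.update row j x))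
          ∂(gaussianReal 0 1) ∂ν ∂(disorder n) := integral_const_mul _ _
    _ = (β / Real.sqrt n) * ∫ g, F2 g ∂(disorder n) := by
        congr 1
        rw [t1]
        exact integral_congr_ae (Filter.Eventually.of_forall fun g => (t2 g).symm)

end KeyIBP

/-! ### Algebraic identities for the trace and the overlap -/

section Algebra

variable (n : ℕ) (β : ℝ)

lemma trace_eq (g : Fin n → Fin n → ℝ) :
    Matrix.trace (((1 + β ^ 2) • (1 : Matrix (Fin n) (Fin n) ℝ) - β • Amat n g) * covM n β g)
      = (1 + β ^ 2) * n
        - (β / Real.sqrt n) * ∑ i : Fin n, ∑ j : Fin n, symg g i j * corr n β g i j := by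
  unfold Matrix.trace covM Amat
  simp only [Matrix.diag_apply, Matrix.mul_apply, Matrix.sub_apply, Matrix.smul_apply,
    Matrix.one_apply, Matrix.of_apply, smul_eq_mul]
  have expand : ∀ i : Fin n,
      (∑ k : Fin n, ((1 + β ^ 2) * (if i = k then 1 else 0) - β * (symg g i k / Real.sqrt n))
        * corr n β g k i)
      = (1 + β ^ 2) - (β / Real.sqrt n) * ∑ k : Fin n, symg g i k * corr n β g i k := by
    intro i
    have hterm : ∀ k : Fin n,
        ((1 + β ^ 2) * (if i = k then 1 else 0) - β * (symg g i k / Real.sqrt n))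
          * corr n β g k i
        = (1 + β ^ 2) * (if i = k then corr n β g k i else 0)
          - (β / Real.sqrt n) * (symg g i k * corr n β g i k) := by
      intro k
      rw [corr_symm n β g k i]
      by_cases h : i = k
      · rw [if_pos h, if_pos h]; ring
      · rw [if_neg h, if_neg h]; ring
    rw [Finset.sum_congr rfl fun k _ => hterm k, Finset.sum_sub_distrib, ← Finset.mul_sum,
      ← Finset.mul_sum, Finset.sum_ite_eq, if_pos (Finset.mem_univ i), corr_diag, mul_one]
  rw [Finset.sum_congr rfl fun i _ => expand i, Finset.sum_sub_distrib, Finset.sum_const,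
    Finset.card_univ, Fintype.card_fin, ← Finset.mul_sum, nsmul_eq_mul, mul_comm (n : ℝ)]

lemma avg1_sq (g : Fin n → Fin n → ℝ) (f : Cfg n → ℝ) :
    (avg1 n β g f) ^ 2 = avg2 n β g (fun s t => f s * f t) := by
  unfold avg1 avg2
  rw [sq, Finset.sum_mul_sum]
  exact Finset.sum_congr rfl fun s _ => Finset.sum_congr rfl fun t _ => by ring

lemma sum_avg2 (g : Fin n → Fin n → ℝ) {κ : Type*} (A : Finset κ) (F : κ → Cfg n → Cfg n → ℝ) :
    ∑ i ∈ A, avg2 n β g (F i) = avg2 n β g (fun s t => ∑ i ∈ A, F i s t) := by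
  unfold avg2
  rw [Finset.sum_comm]
  refine Finset.sum_congr rfl fun s _ => ?_
  rw [Finset.sum_comm]
  refine Finset.sum_congr rfl fun t _ => ?_
  rw [Finset.sum_mul]

lemma avg2_congr (g : Fin n → Fin n → ℝ) (f f' : Cfg n → Cfg n → ℝ)
    (h : ∀ s t, f s t = f' s t) : avg2 n β g f = avg2 n β g f' := by
  unfold avg2
  exact Finset.sum_congr rfl fun s _ => Finset.sum_congr rfl fun t _ => by rw [h]

lemma sum_corr_sq (hn : 1 ≤ n) (g : Fin n → Fin n → ℝ) :
    (∑ i : Fin n, ∑ j : Fin n, corr n β g i j ^ 2)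
      = (n : ℝ) ^ 2 * avg2 n β g (fun s t => overlap s t ^ 2) := by
  have hn0 : (n : ℝ) ≠ 0 := Nat.cast_ne_zero.mpr (by omega)
  have step1 : ∀ i j : Fin n, corr n β g i j ^ 2
      = avg2 n β g (fun s t => (spin s i * spin s j) * (spin t i * spin t j)) := by
    intro i j
    exact avg1_sq n β g _
  calc (∑ i : Fin n, ∑ j : Fin n, corr n β g i j ^ 2)
      = ∑ i : Fin n, avg2 n β g
          (fun s t => ∑ j : Fin n, (spin s i * spin s j) * (spin t i * spin t j)) := by
        refine Finset.sum_congr rfl fun i _ => ?_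
        rw [Finset.sum_congr rfl fun j _ => step1 i j, sum_avg2]
    _ = avg2 n β g (fun s t => ∑ i : Fin n, ∑ j : Fin n,
          (spin s i * spin s j) * (spin t i * spin t j)) := sum_avg2 n β g _ _
    _ = avg2 n β g (fun s t => (n : ℝ) ^ 2 * overlap s t ^ 2) := by
        refine avg2_congr n β g _ _ fun s t => ?_
        unfold overlap
        rw [div_pow, mul_div_cancel₀ _ (pow_ne_zero 2 hn0)]
        rw [sq, Finset.sum_mul_sum]
        exact Finset.sum_congr rfl fun i _ => Finset.sum_congr rfl fun j _ => by ring
    _ = (n : ℝ) ^ 2 * avg2 n β g (fun s t => overlap s t ^ 2) := by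
        unfold avg2
        rw [Finset.mul_sum]
        refine Finset.sum_congr rfl fun s _ => ?_
        rw [Finset.mul_sum]
        exact Finset.sum_congr rfl fun t _ => by ring

lemma integrable_corr_sq (i j : Fin n) :
    Integrable (fun g : Fin n → Fin n → ℝ => corr n β g i j ^ 2) (disorder n) := by
  refine integrable_bdd _ (((continuous_corr n β i j).pow 2).aestronglyMeasurable) 1 fun g => ?_
  have h := abs_corr_le n β g i j
  calc |corr n β g i j ^ 2| = |corr n β g i j| ^ 2 := abs_pow _ 2
    _ ≤ 1 ^ 2 := pow_le_pow_left₀ (abs_nonneg _) h 2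
    _ = 1 := one_pow 2

lemma integrable_F1_all (i j : Fin n) :
    Integrable (fun g : Fin n → Fin n → ℝ => symg g i j * corr n β g i j) (disorder n) := by
  rcases le_total i j with h | h
  · exact integrable_F1_disorder n β i j h
  · exact (integrable_F1_disorder n β j i h).congr
      (Filter.Eventually.of_forall fun g => by simp only []; rw [symg_symm, corr_symm])

end Algebra

/-- Section 3, the trace term: the exact identity
`E Tr(((1+β²)I − βA) cov(μ)) = n + n β² E⟨R₁₂²⟩`. -/
theorem sk_trace_identity (n : ℕ) (hn : 1 ≤ n) (β : ℝ) (hβ : 0 ≤ β) :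
    (∫ g, Matrix.trace
        (((1 + β ^ 2) • (1 : Matrix (Fin n) (Fin n) ℝ) - β • Amat n g) * covM n β g)
      ∂(disorder n))
      = (n : ℝ) + (n : ℝ) * β ^ 2 *
          ∫ g, avg2 n β g (fun s t => (overlap s t) ^ 2) ∂(disorder n) := by
  have hn0 : (n : ℝ) ≠ 0 := Nat.cast_ne_zero.mpr (by omega)
  set c : ℝ := β / Real.sqrt n with hc
  set tt : Fin n → Fin n → ℝ := fun i j => ∫ g, corr n β g i j ^ 2 ∂(disorder n) with htt
  -- rewrite the trace integrand
  have h1 : (fun g => Matrix.trace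
        (((1 + β ^ 2) • (1 : Matrix (Fin n) (Fin n) ℝ) - β • Amat n g) * covM n β g))
      = fun g => (1 + β ^ 2) * (n : ℝ)
          - c * ∑ i : Fin n, ∑ j : Fin n, symg g i j * corr n β g i j :=
    funext (trace_eq n β)
  rw [h1]
  -- single-coupling integrals
  have hkey : ∀ i j : Fin n,
      ∫ g, symg g i j * corr n β g i j ∂(disorder n) = c * (1 - tt i j) := by
    intro i j
    rw [key_ibp n β i j]
    congr 1
    rw [integral_sub (integrable_const 1) (integrable_corr_sq n β i j), integral_const]
    simp
    rfl
  have hS : Integrable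
      (fun g => ∑ i : Fin n, ∑ j : Fin n, symg g i j * corr n β g i j) (disorder n) :=
    integrable_finset_sum _ fun i _ => integrable_finset_sum _ fun j _ =>
      integrable_F1_all n β i j
  have hLHS : ∫ g, ((1 + β ^ 2) * (n : ℝ)
        - c * ∑ i : Fin n, ∑ j : Fin n, symg g i j * corr n β g i j) ∂(disorder n)
      = (1 + β ^ 2) * (n : ℝ) - c * ∑ i : Fin n, ∑ j : Fin n, (c * (1 - tt i j)) := by
    rw [integral_sub (integrable_const _) (hS.const_mul c), integral_const]
    simp only [measure_univ, ENNReal.toReal_one, one_smul, probReal_univ]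
    congr 1
    rw [integral_const_mul]
    congr 1
    rw [integral_finset_sum _ fun i _ => integrable_finset_sum _ fun j _ =>
      integrable_F1_all n β i j]
    refine Finset.sum_congr rfl fun i _ => ?_
    rw [integral_finset_sum _ fun j _ => integrable_F1_all n β i j]
    exact Finset.sum_congr rfl fun j _ => hkey i j
  rw [hLHS]
  -- the right-hand side integral
  have havg : (fun g => avg2 n β g (fun s t => overlap s t ^ 2))
      = fun g => (∑ i : Fin n, ∑ j : Fin n, corr n β g i j ^ 2) / (n : ℝ) ^ 2 := by
    funext g
    rw [eq_div_iff (pow_ne_zero 2 hn0), sum_corr_sq n β hn g]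
    ring
  have hRHS : ∫ g, avg2 n β g (fun s t => overlap s t ^ 2) ∂(disorder n)
      = (∑ i : Fin n, ∑ j : Fin n, tt i j) / (n : ℝ) ^ 2 := by
    rw [havg, integral_div]
    congr 1
    rw [integral_finset_sum _ fun i _ => integrable_finset_sum _ fun j _ =>
      integrable_corr_sq n β i j]
    refine Finset.sum_congr rfl fun i _ => ?_
    rw [integral_finset_sum _ fun j _ => integrable_corr_sq n β i j]
  rw [hRHS]
  -- final arithmetic
  set T : ℝ := ∑ i : Fin n, ∑ j : Fin n, tt i j with hT
  have hsum : ∑ i : Fin n, ∑ j : Fin n, (c * (1 - tt i j)) = c * ((n : ℝ) * (n : ℝ) - T) := by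
    calc ∑ i : Fin n, ∑ j : Fin n, (c * (1 - tt i j))
        = ∑ i : Fin n, (c * ((n : ℝ) - ∑ j : Fin n, tt i j)) := by
          refine Finset.sum_congr rfl fun i _ => ?_
          rw [← Finset.mul_sum, Finset.sum_sub_distrib, Finset.sum_const, Finset.card_univ,
            Fintype.card_fin, nsmul_eq_mul, mul_one]
      _ = c * ((n : ℝ) * (n : ℝ) - T) := by
          rw [← Finset.mul_sum, Finset.sum_sub_distrib, Finset.sum_const, Finset.card_univ,
            Fintype.card_fin, nsmul_eq_mul, hT]
  rw [hsum]
  have hcc : c * c = β ^ 2 / (n : ℝ) := by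
    rw [hc, div_mul_div_comm, Real.mul_self_sqrt (Nat.cast_nonneg n), sq]
  have : c * (c * ((n : ℝ) * (n : ℝ) - T)) = (β ^ 2 / (n : ℝ)) * ((n : ℝ) * (n : ℝ) - T) := by
    rw [← mul_assoc, hcc]
  rw [this]
  field_simp
  ring
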